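/- arXiv:math/0510288 — 2 statements merged into one kernel-verified Lean document; each statement's English description precedes it below -/
import Mathlib

section
/- There is a unique anti-automorphism `bar` of the coordinate algebra O_q(M(n)) of n×n quantum matrices, as an algebra over ℚ, satisfying bar(Z_ij) = Z_ij for all 1 ≤ i,j ≤ n and bar(q·x) = q^{-1}·bar(x) for all x (i.e. bar is semilinear over the ℚ-field automorphism of ℚ(q) sending q to q^{-1}); moreover bar is an involution. -/
noncomputable section

/-- The base field `K = ℚ(q)`, the field of rational functions in `q` over `ℚ`. -/
abbrev KK : Type := RatFunc ℚ

/-- The indeterminate `q ∈ ℚ(q)`. -/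
def qq : KK := RatFunc.X

/-- The defining relations of the coordinate algebra `O_q(M(n))` of `n × n`
quantum matrices, as relations on the free algebra on the generators `Z_{ij}`. -/
inductive QMRel (n : ℕ) : FreeAlgebra KK (Fin n × Fin n) → FreeAlgebra KK (Fin n × Fin n) → Prop
  | row (i : Fin n) {j k : Fin n} (h : j < k) :
      QMRel n (FreeAlgebra.ι KK (i, j) * FreeAlgebra.ι KK (i, k))
        ((qq ^ 2) • (FreeAlgebra.ι KK (i, k) * FreeAlgebra.ι KK (i, j)))
  | col (j : Fin n) {i k : Fin n} (h : i < k) :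
      QMRel n (FreeAlgebra.ι KK (i, j) * FreeAlgebra.ι KK (k, j))
        ((qq ^ 2) • (FreeAlgebra.ι KK (k, j) * FreeAlgebra.ι KK (i, j)))
  | swap {i j s t : Fin n} (h1 : s < i) (h2 : j < t) :
      QMRel n (FreeAlgebra.ι KK (i, j) * FreeAlgebra.ι KK (s, t))
        (FreeAlgebra.ι KK (s, t) * FreeAlgebra.ι KK (i, j))
  | mixed {i j s t : Fin n} (h1 : i < s) (h2 : j < t) :
      QMRel n (FreeAlgebra.ι KK (i, j) * FreeAlgebra.ι KK (s, t))
        (FreeAlgebra.ι KK (s, t) * FreeAlgebra.ι KK (i, j)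
          + (qq ^ 2 - qq⁻¹ ^ 2) • (FreeAlgebra.ι KK (i, t) * FreeAlgebra.ι KK (s, j)))

/-- The coordinate algebra `O_q(M(n))` of `n × n` quantum matrices. -/
abbrev OqM (n : ℕ) : Type := RingQuot (QMRel n)

/-- The generator `Z_{ij}` of `O_q(M(n))` (indices `0`-based). -/
def Zg (n : ℕ) (i j : Fin n) : OqM n :=
  RingQuot.mkAlgHom KK (QMRel n) (FreeAlgebra.ι KK (i, j))

/-- The ordered monomial `Z^A`: the product of the `Z_{ij}^{a_{ij}}` with the factors
arranged in lexicographic order of the positions `(i,j)`. -/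
def Zmon {n : ℕ} (A : Matrix (Fin n) (Fin n) ℕ) : OqM n :=
  ((List.finRange n).map (fun i =>
    ((List.finRange n).map (fun j => Zg n i j ^ A i j)).prod)).prod

/-- Row sums of a matrix. -/
def rosum {n : ℕ} (A : Matrix (Fin n) (Fin n) ℕ) (i : Fin n) : ℕ := ∑ j, A i j

/-- Column sums of a matrix. -/
def cosum {n : ℕ} (A : Matrix (Fin n) (Fin n) ℕ) (j : Fin n) : ℕ := ∑ i, A i j

/-- The exponent `∑_i ∑_{j>k} a_{ij} a_{ik} + ∑_i ∑_{j>k} a_{ji} a_{ki}`. -/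
def expD {n : ℕ} (A : Matrix (Fin n) (Fin n) ℕ) : ℕ :=
  (∑ i, ∑ j, ∑ k, if k < j then A i j * A i k else 0) +
  (∑ i, ∑ j, ∑ k, if k < j then A j i * A k i else 0)

/-- `D(A) = q^{-(∑_i ∑_{j>k} a_{ij}a_{ik} + ∑_i ∑_{j>k} a_{ji}a_{ki})}`. -/
def Dcoef {n : ℕ} (A : Matrix (Fin n) (Fin n) ℕ) : KK := qq ^ (-(expD A : ℤ))

/-- `E(A) = q^{-2(∑_i ∑_{j>k} a_{ij}a_{ik} + ∑_i ∑_{j>k} a_{ji}a_{ki})}` = `D(A)^2`. -/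
def Ecoef {n : ℕ} (A : Matrix (Fin n) (Fin n) ℕ) : KK := qq ^ (-(2 * expD A : ℤ))

/-- The normalized monomial `Z(A) = D(A) Z^A`. -/
def Zcan {n : ℕ} (A : Matrix (Fin n) (Fin n) ℕ) : OqM n := Dcoef A • Zmon A

/-- Lexicographic order on the positions `(i,j)`. -/
def posLt {n : ℕ} (p p' : Fin n × Fin n) : Prop :=
  p.1 < p'.1 ∨ (p.1 = p'.1 ∧ p.2 < p'.2)

/-- Lexicographic order on matrices: entries compared in lexicographic order of
positions. -/
def matLt {n : ℕ} (A B : Matrix (Fin n) (Fin n) ℕ) : Prop :=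
  ∃ i j, A i j < B i j ∧ ∀ i' j', posLt (i', j') (i, j) → A i' j' = B i' j'

/-- Evaluation of an integer polynomial at `q`, giving the image of `ℤ[q]` in `ℚ(q)`. -/
def polyval (p : Polynomial ℤ) : KK := Polynomial.aeval qq p

/-- Membership in `q·ℤ[q] ⊆ ℚ(q)` (polynomials in `q` with zero constant term). -/
def inqZq (c : KK) : Prop := ∃ p : Polynomial ℤ, c = qq * polyval p

/-- Membership in the Laurent polynomial ring `ℤ[q,q⁻¹] ⊆ ℚ(q)`. -/
def inLaurent (c : KK) : Prop := ∃ (p : Polynomial ℤ) (k : ℕ), c = qq⁻¹ ^ k * polyval p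

/-- The properties characterizing the bar involution of `O_q(M(n))`: a `ℚ`-linear
bijective anti-automorphism with `bar(Z_{ij}) = Z_{ij}` and `bar(q·x) = q⁻¹·bar(x)`. -/
def IsBar (n : ℕ) (f : OqM n → OqM n) : Prop :=
  (∀ x y, f (x + y) = f x + f y) ∧
  (∀ x y, f (x * y) = f y * f x) ∧
  (∀ (c : ℚ) (x : OqM n), f ((RatFunc.C c) • x) = (RatFunc.C c) • f x) ∧
  (∀ x : OqM n, f (qq • x) = qq⁻¹ • f x) ∧
  (∀ i j, f (Zg n i j) = Zg n i j) ∧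
  Function.Bijective f

/-- Condition (2) of Theorem 3.2: `b(A) = Z(A) + ∑_{B<A} h_B(A) Z(B)` with
`h_B(A) ∈ qℤ[q]`, `ro(B) = ro(A)`, `co(B) = co(A)`. -/
def CanForm (n : ℕ) (b : Matrix (Fin n) (Fin n) ℕ → OqM n)
    (A : Matrix (Fin n) (Fin n) ℕ) : Prop :=
  ∃ (s : Finset (Matrix (Fin n) (Fin n) ℕ)) (h : Matrix (Fin n) (Fin n) ℕ → KK),
    (∀ B ∈ s, matLt B A ∧ rosum B = rosum A ∧ cosum B = cosum A ∧ inqZq (h B)) ∧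
    b A = Zcan A + ∑ B ∈ s, h B • Zcan B

/-- The two conditions of Theorem 3.2 characterizing the basis `B* = {b(A)}`. -/
def IsCanBasis (n : ℕ) (f : OqM n → OqM n)
    (b : Matrix (Fin n) (Fin n) ℕ → OqM n) : Prop :=
  ∀ A, f (b A) = b A ∧ CanForm n b A

/-- The `ℤ[q]`-lattice `L* = ⊕_A ℤ[q]·Z(A)`, realized as the `ℤ`-span of the
elements `q^k Z(A)`. -/
def Lstar (n : ℕ) : Submodule ℤ (OqM n) :=
  Submodule.span ℤ {x | ∃ (A : Matrix (Fin n) (Fin n) ℕ) (k : ℕ), x = qq ^ k • Zcan A}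

/-- The sublattice `q·L* = ⊕_A qℤ[q]·Z(A)`. -/
def qLstar (n : ℕ) : Submodule ℤ (OqM n) :=
  Submodule.span ℤ {x | ∃ (A : Matrix (Fin n) (Fin n) ℕ) (k : ℕ), x = qq ^ (k + 1) • Zcan A}

/-- The number of inversions (the length) of a permutation. -/
def invCount {m : ℕ} (σ : Equiv.Perm (Fin m)) : ℕ :=
  (Finset.univ.filter (fun p : Fin m × Fin m => p.1 < p.2 ∧ σ p.2 < σ p.1)).card

/-- The quantum minor `det_q(I,J) = ∑_{σ ∈ S_m} (-q²)^{ℓ(σ)} Z_{i_1 j_{σ(1)}} ⋯ Z_{i_m j_{σ(m)}}`,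
for `I, J` given by (strictly monotone) enumerations `ii, jj : Fin m → Fin n`. -/
def qminor (n m : ℕ) (ii jj : Fin m → Fin n) : OqM n :=
  ∑ σ : Equiv.Perm (Fin m),
    ((-(qq ^ 2)) ^ invCount σ) • ((List.finRange m).map (fun r => Zg n (ii r) (jj (σ r)))).prod

/-- The quantum determinant `det_q = ∑_{σ ∈ S_n} (-q²)^{ℓ(σ)} Z_{1σ(1)} ⋯ Z_{nσ(n)}`. -/
def detq (n : ℕ) : OqM n := qminor n n id id

/-- The quantum minor `det_q(t) = det_q({1,…,t}, {n−t+1,…,n})`. -/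
def detqt (n t : ℕ) : OqM n :=
  if h : t ≤ n then
    qminor n t (fun r => ⟨(r : ℕ), lt_of_lt_of_le r.isLt h⟩)
      (fun r => ⟨n - t + (r : ℕ), by have := r.isLt; omega⟩)
  else 0

/-- `det_{q,i}`: the quantum determinant of the subalgebra generated by the `Z_{st}` with
`s,t ∈ {i,…,n}` (`0`-based: `s,t ≥ i`), i.e. the quantum minor `det_q({i,…,n},{i,…,n})`. -/
def detLower (n : ℕ) (i : Fin n) : OqM n :=
  qminor n (n - (i : ℕ)) (fun r => ⟨(i : ℕ) + (r : ℕ), by have := r.isLt; omega⟩)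
    (fun r => ⟨(i : ℕ) + (r : ℕ), by have := r.isLt; omega⟩)

/-- The matrix `E_t`, having the `t × t` identity matrix in the upper right corner and
zeros elsewhere. -/
def Emat (n t : ℕ) : Matrix (Fin n) (Fin n) ℕ :=
  Matrix.of fun i j => if (i : ℕ) < t ∧ (j : ℕ) = n - t + (i : ℕ) then 1 else 0

/-- The partial sums `Pr(A,s,t) = ∑_{i ≤ s, j ≤ t} a_{ij}`. -/
def PrSum {n : ℕ} (A : Matrix (Fin n) (Fin n) ℕ) (s t : Fin n) : ℕ :=
  ∑ i, ∑ j, if i ≤ s ∧ j ≤ t then A i j else 0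

/-- The properties of a bar anti-automorphism, as an additive self-equivalence:
anti-multiplicativity, `ℚ`-linearity, the semilinearity rule `bar(q·x) = q⁻¹·bar(x)`,
and fixing the generators `Z_{ij}`. -/
def IsBarAuto (n : ℕ) (f : OqM n ≃+ OqM n) : Prop :=
  (∀ x y, f (x * y) = f y * f x) ∧
  (∀ (c : ℚ) (x : OqM n), f ((RatFunc.C c) • x) = (RatFunc.C c) • f x) ∧
  (∀ x : OqM n, f (qq • x) = qq⁻¹ • f x) ∧
  (∀ i j, f (Zg n i j) = Zg n i j)

/-!
Bar is first built on the free algebra, as the ring homomorphism into the opposite of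
`O_q(M(n))` that fixes the generators and twists scalars by the automorphism `q ↦ q⁻¹` of
`ℚ(q)`. It kills the defining relations, so it descends to `O_q(M(n))`, and it is involutive
since its square fixes both the scalars and the generators.

For uniqueness, the scalars `c` for which a given anti-automorphism `f` satisfies
`f (c • x) = τ c • f x` for all `x`, with `τ : q ↦ q⁻¹`, form a subfield of `ℚ(q)`; by hypothesis
it contains `ℚ` and `q`, so it is everything. Then `f` and bar agree on scalars and generators,
hence everywhere.
-/

namespace RatFunc

open Polynomial

variable {K : Type*} [Field K]

theorem transcendental_X_inv : Transcendental K (X⁻¹ : K⟮X⟯) := by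
  refine transcendental_of_ne_C _ ?_
  rintro ⟨c, hc⟩
  simpa using congrArg intDegree hc

theorem subfield_eq_top_of_C_mem_of_X_mem (S : Subfield K⟮X⟯) (hC : ∀ a, C a ∈ S)
    (hX : X ∈ S) : S = ⊤ := by
  have hE : S.toIntermediateField hC = ⊤ := by
    rw [eq_top_iff, ← adjoin_X, IntermediateField.adjoin_simple_le_iff]
    exact hX
  exact congrArg IntermediateField.toSubfield hE

def invX : K⟮X⟯ →+* K⟮X⟯ :=
  (liftAlgHom (aeval X⁻¹) <| nonZeroDivisors_le_comap_nonZeroDivisors_of_injective _ <|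
    transcendental_iff_injective.mp transcendental_X_inv).toRingHom

@[simp]
theorem invX_X : invX (X : K⟮X⟯) = X⁻¹ := by
  unfold invX
  simpa using liftAlgHom_apply_div (aeval (X⁻¹ : K⟮X⟯)) _ (Polynomial.X : K[X]) 1

@[simp]
theorem invX_C (a : K) : invX (C a) = C a := by
  rw [← algebraMap_eq_C]
  exact AlgHom.commutes _ a

@[simp]
theorem invX_invX (f : K⟮X⟯) : invX (invX f) = f := by
  have : (invX.comp invX).eqLocusField (RingHom.id K⟮X⟯) = ⊤ :=
    subfield_eq_top_of_C_mem_of_X_mem _ (fun a => by simp) (by simp)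
  exact (this ▸ Subfield.mem_top f : f ∈ (invX.comp invX).eqLocusField (RingHom.id _))

end RatFunc

section SemilinearLocus

variable {K L M N : Type*} [Field K] [Field L] [AddCommGroup M] [Module K M]
  [AddCommGroup N] [Module L N]

def AddMonoidHom.semilinearLocus (σ : K →+* L) (f : M →+ N) : Subfield K where
  carrier := {c | ∀ x, f (c • x) = σ c • f x}
  zero_mem' x := by simp
  one_mem' x := by simp
  add_mem' ha hb x := by simp only [add_smul, map_add, ha x, hb x]
  neg_mem' ha x := by simp only [neg_smul, map_neg, ha x]
  mul_mem' ha hb x := by simp only [mul_smul, map_mul, ha _, hb x]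
  inv_mem' a ha x := by
    rcases eq_or_ne a 0 with rfl | ha0
    · simp
    · have hσa : σ a ≠ 0 := (map_ne_zero σ).mpr ha0
      rw [map_inv₀, eq_inv_smul_iff₀ hσa, ← ha, smul_inv_smul₀ ha0]

end SemilinearLocus

namespace FreeAlgebra

variable {R X A : Type*} [CommSemiring R] [Semiring A]

def liftRingHom (σ : R →+* A) (hσ : ∀ r a, σ r * a = a * σ r) (f : X → A) :
    FreeAlgebra R X →+* A :=
  letI := σ.toAlgebra' hσ
  (lift R f).toRingHom

variable (σ : R →+* A) (hσ : ∀ r a, σ r * a = a * σ r) (f : X → A)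

@[simp]
theorem liftRingHom_ι (x : X) : liftRingHom σ hσ f (ι R x) = f x :=
  letI := σ.toAlgebra' hσ
  lift_ι_apply f x

@[simp]
theorem liftRingHom_algebraMap (r : R) :
    liftRingHom σ hσ f (algebraMap R (FreeAlgebra R X) r) = σ r :=
  letI := σ.toAlgebra' hσ
  (lift R f).commutes r

end FreeAlgebra

local notation "τ" => (RatFunc.invX : KK →+* KK)

theorem qq_ne_zero : qq ≠ 0 := RatFunc.X_ne_zero

@[simp]
theorem invX_qq : τ qq = qq⁻¹ := RatFunc.invX_X

namespace OqM

open MulOpposite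

variable {n : ℕ}

theorem Zg_mul_Zg_same_row (i : Fin n) {j k : Fin n} (h : j < k) :
    Zg n i j * Zg n i k = qq ^ 2 • (Zg n i k * Zg n i j) := by
  simpa only [Zg, map_mul, map_smul] using RingQuot.mkAlgHom_rel KK (QMRel.row i h)

theorem Zg_mul_Zg_same_col (j : Fin n) {i k : Fin n} (h : i < k) :
    Zg n i j * Zg n k j = qq ^ 2 • (Zg n k j * Zg n i j) := by
  simpa only [Zg, map_mul, map_smul] using RingQuot.mkAlgHom_rel KK (QMRel.col j h)

theorem Zg_mul_Zg_comm {i j s t : Fin n} (hs : s < i) (ht : j < t) :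
    Zg n i j * Zg n s t = Zg n s t * Zg n i j := by
  simpa only [Zg, map_mul] using RingQuot.mkAlgHom_rel KK (QMRel.swap hs ht)

theorem Zg_mul_Zg_of_lt_of_lt {i j s t : Fin n} (hs : i < s) (ht : j < t) :
    Zg n i j * Zg n s t = Zg n s t * Zg n i j + (qq ^ 2 - qq⁻¹ ^ 2) • (Zg n i t * Zg n s j) := by
  simpa only [Zg, map_mul, map_add, map_smul] using RingQuot.mkAlgHom_rel KK (QMRel.mixed hs ht)

@[elab_as_elim]
theorem induction_on {P : OqM n → Prop} (x : OqM n)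
    (scalar : ∀ c, P (algebraMap KK (OqM n) c)) (generator : ∀ i j, P (Zg n i j))
    (add : ∀ x y, P x → P y → P (x + y)) (mul : ∀ x y, P x → P y → P (x * y)) : P x := by
  obtain ⟨y, rfl⟩ := RingQuot.mkAlgHom_surjective KK (QMRel n) x
  induction y using FreeAlgebra.induction with
  | grade0 c => simpa only [AlgHom.commutes] using scalar c
  | grade1 p => exact generator p.1 p.2
  | add a b ha hb => simpa only [map_add] using add _ _ ha hb
  | mul a b ha hb => simpa only [map_mul] using mul _ _ ha hb

def barFree : FreeAlgebra KK (Fin n × Fin n) →+* (OqM n)ᵐᵒᵖ :=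
  FreeAlgebra.liftRingHom ((algebraMap KK (OqM n)ᵐᵒᵖ).comp τ)
    (fun c x => Algebra.commutes (τ c) x) fun p => op (Zg n p.1 p.2)

@[simp]
theorem unop_barFree_ι (p : Fin n × Fin n) :
    unop (barFree (FreeAlgebra.ι KK p)) = Zg n p.1 p.2 := by
  simp [barFree]

@[simp]
theorem unop_barFree_smul (c : KK) (x : FreeAlgebra KK (Fin n × Fin n)) :
    unop (barFree (c • x)) = τ c • unop (barFree x) := by
  simp [barFree, Algebra.smul_def, Algebra.commutes]

theorem barFree_rel ⦃x y : FreeAlgebra KK (Fin n × Fin n)⦄ (h : QMRel n x y) :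
    barFree x = barFree y := by
  apply unop_injective
  induction h with
  | row i h => simp [Zg_mul_Zg_same_row i h, qq_ne_zero]
  | col j h => simp [Zg_mul_Zg_same_col j h, qq_ne_zero]
  | swap hs ht => simp [Zg_mul_Zg_comm hs ht]
  | mixed hs ht =>
    -- `q ↦ q⁻¹` turns `q² - q⁻²` into its negative, and `Z_it`, `Z_sj` commute.
    simp only [map_add, map_mul, unop_add, unop_mul, unop_barFree_ι, unop_barFree_smul, map_sub,
      map_pow, invX_qq, map_inv₀, inv_inv]
    rw [Zg_mul_Zg_of_lt_of_lt hs ht, Zg_mul_Zg_comm hs ht, add_assoc, ← add_smul,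
      sub_add_sub_cancel, sub_self, zero_smul, add_zero]

def bar : OqM n →+ OqM n :=
  opAddEquiv.symm.toAddMonoidHom.comp (RingQuot.lift ⟨barFree, barFree_rel⟩).toAddMonoidHom

theorem bar_mkAlgHom (x : FreeAlgebra KK (Fin n × Fin n)) :
    bar (RingQuot.mkAlgHom KK (QMRel n) x) = unop (barFree x) := by
  simp [bar, RingQuot.mkAlgHom, RingQuot.lift_mkRingHom_apply]

theorem bar_mul (x y : OqM n) : bar (x * y) = bar y * bar x := by
  simp [bar]

theorem bar_one : bar (1 : OqM n) = 1 := by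
  simp [bar]

theorem bar_smul (c : KK) (x : OqM n) : bar (c • x) = τ c • bar x := by
  obtain ⟨y, rfl⟩ := RingQuot.mkAlgHom_surjective KK (QMRel n) x
  rw [← map_smul, bar_mkAlgHom, bar_mkAlgHom, unop_barFree_smul]

theorem bar_Zg (i j : Fin n) : bar (Zg n i j) = Zg n i j :=
  (bar_mkAlgHom _).trans (unop_barFree_ι _)

theorem bar_algebraMap (c : KK) :
    bar (algebraMap KK (OqM n) c) = algebraMap KK (OqM n) (τ c) := by
  simp only [Algebra.algebraMap_eq_smul_one, bar_smul, bar_one]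

theorem bar_bar (x : OqM n) : bar (bar x) = x := by
  induction x using induction_on with
  | scalar c => simp [bar_algebraMap]
  | generator i j => simp [bar_Zg]
  | add x y hx hy => simp [hx, hy]
  | mul x y hx hy => simp [bar_mul, hx, hy]

def barEquiv : OqM n ≃+ OqM n :=
  { bar with
    invFun := bar
    left_inv := bar_bar
    right_inv := bar_bar }

theorem isBarAuto_barEquiv : IsBarAuto n barEquiv := by
  refine ⟨bar_mul, fun c x => ?_, fun x => ?_, bar_Zg⟩ <;> simp [barEquiv, bar_smul]

end OqM

namespace IsBarAuto

variable {n : ℕ} {f : OqM n ≃+ OqM n}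

theorem map_one (hf : IsBarAuto n f) : f 1 = 1 := by
  obtain ⟨y, hy⟩ := f.surjective 1
  calc f 1 = f 1 * f y := by rw [hy, mul_one]
    _ = 1 := by rw [← hf.1, mul_one, hy]

theorem map_smul (hf : IsBarAuto n f) (c : KK) (x : OqM n) : f (c • x) = τ c • f x := by
  have : f.toAddMonoidHom.semilinearLocus τ = ⊤ :=
    RatFunc.subfield_eq_top_of_C_mem_of_X_mem _ (fun a y => by simpa using hf.2.1 a y)
      (fun y => by simpa [qq] using hf.2.2.1 y)
  exact (this ▸ Subfield.mem_top c : c ∈ f.toAddMonoidHom.semilinearLocus τ) x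

theorem eq_barEquiv (hf : IsBarAuto n f) : f = OqM.barEquiv := by
  ext x
  induction x using OqM.induction_on with
  | scalar c =>
    rw [Algebra.algebraMap_eq_smul_one, hf.map_smul, hf.map_one]
    simp [OqM.barEquiv, OqM.bar_smul, OqM.bar_one]
  | generator i j => simp [hf.2.2.2, OqM.barEquiv, OqM.bar_Zg]
  | add x y hx hy => simp_all
  | mul x y hx hy => simp_all [hf.1, OqM.barEquiv, OqM.bar_mul]

end IsBarAuto

/-- There is a unique anti-automorphism `bar` of `O_q(M(n))`, as an
algebra over `ℚ`, with `bar(Z_{ij}) = Z_{ij}` and `bar(q·x) = q⁻¹·bar(x)`; moreover it is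
an involution. -/
theorem stmt0 (n : ℕ) :
    (∃! f : OqM n ≃+ OqM n, IsBarAuto n f) ∧
    (∀ f : OqM n ≃+ OqM n, IsBarAuto n f → ∀ x, f (f x) = x) := by
  refine ⟨⟨OqM.barEquiv, OqM.isBarAuto_barEquiv, fun f hf => hf.eq_barEquiv⟩, fun f hf x => ?_⟩
  rw [hf.eq_barEquiv]
  exact OqM.bar_bar x
end
end

section
/- Let b_1, b_2 ∈ B* be elements of the canonical-type basis of O_q(M(n)). If b_1 b_2 = q^a b for some b ∈ B* and some integer a, then b_1 b_2 = q^{2a} b_2 b_1; in particular b_1 and b_2 q-commute. -/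
noncomputable section

/-- Lemma 4.1. If `b_1, b_2 ∈ B*` and `b_1 b_2 = q^a b` for some
`b ∈ B*` and `a ∈ ℤ`, then `b_1 b_2 = q^{2a} b_2 b_1`; in particular `b_1` and `b_2`
`q`-commute. -/
theorem stmt12 (n : ℕ) (f : OqM n → OqM n) (hf : IsBar n f)
    (b : Matrix (Fin n) (Fin n) ℕ → OqM n) (hb : IsCanBasis n f b)
    (A1 A2 A3 : Matrix (Fin n) (Fin n) ℕ) (a : ℤ)
    (h : b A1 * b A2 = (qq ^ a) • b A3) :
    b A1 * b A2 = (qq ^ (2 * a)) • (b A2 * b A1) := by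
  have hq : qq ≠ 0 := RatFunc.X_ne_zero
  obtain ⟨_hadd, hmul, _hC, hqs, _hZ, _hbij⟩ := hf
  have hinv : ∀ x : OqM n, f (qq⁻¹ • x) = qq • f x := by
    intro x
    have := hqs (qq⁻¹ • x)
    rw [smul_smul, mul_inv_cancel₀ hq, one_smul] at this
    rw [this, smul_smul, mul_inv_cancel₀ hq, one_smul]
  have hpow : ∀ (k : ℕ) (x : OqM n), f (qq ^ k • x) = qq⁻¹ ^ k • f x := by
    intro k
    induction k with
    | zero => intro x; simp
    | succ k ih =>
        intro x
        rw [pow_succ, mul_comm, ← smul_smul, hqs, ih, smul_smul, pow_succ, mul_comm]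
  have hpow' : ∀ (k : ℕ) (x : OqM n), f (qq⁻¹ ^ k • x) = qq ^ k • f x := by
    intro k
    induction k with
    | zero => intro x; simp
    | succ k ih =>
        intro x
        rw [pow_succ, mul_comm, ← smul_smul, hinv, ih, smul_smul, pow_succ, mul_comm]
  have hzpow : ∀ (m : ℤ) (x : OqM n), f (qq ^ m • x) = qq ^ (-m) • f x := by
    intro m x
    obtain ⟨k, rfl | rfl⟩ := m.eq_nat_or_neg
    · rw [zpow_natCast, hpow, zpow_neg, zpow_natCast, ← inv_pow]
    · rw [neg_neg, zpow_neg, zpow_natCast, ← inv_pow, hpow']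
  have h1 := (hb A1).1
  have h2 := (hb A2).1
  have h3 := (hb A3).1
  have key : b A2 * b A1 = qq ^ (-a) • b A3 := by
    have := congrArg f h
    rwa [hmul, h1, h2, hzpow, h3] at this
  rw [key, smul_smul, ← zpow_add₀ hq, h]
  ring_nf
end
end
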